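/- The nontrivial proper normal subgroups of G_{p,q} are exactly the following six subgroups: N_p = {(a^{qs},1) : 0 ≤ s ≤ p−1}, N_q = {(a^{ps},1) : 0 ≤ s ≤ q−1}, N¹_{pq} = {(a^l,1) : 0 ≤ l ≤ pq−1}, N²_{pq} = {(a^{qs}, c^m) : 0 ≤ s ≤ p−1, 0 ≤ m ≤ q−1}, N_{2pq} = {(b^ε a^l, 1) : ε ∈ {0,1}, 0 ≤ l ≤ pq−1}, and N_{pq²} = {(a^l, c^m) : 0 ≤ l ≤ pq−1, 0 ≤ m ≤ q−1}. Moreover N_p ≅ C_p, N_q ≅ C_q, N¹_{pq} ≅ C_{pq}, N²_{pq} ≅ F_{p,q} (the nonabelian group of order pq), and N_{2pq} ≅ D_{2pq}. -/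

import Mathlib

open Multiplicative

namespace Mizerka

/-- The standing hypotheses: `p` and `q` are odd primes with `q ∣ p - 1`, and `i` is a
natural number with `i ≡ 1 (mod q)` whose multiplicative order modulo `p` equals `q`. -/
structure Hyp (p q i : ℕ) : Prop where
  hp : Nat.Prime p
  hq : Nat.Prime q
  hoddp : Odd p
  hoddq : Odd q
  hdvd : q ∣ p - 1
  hmod : i ≡ 1 [MOD q]
  hord : orderOf (i : ZMod p) = q

namespace Hyp

variable {p q i : ℕ}

theorem coprime_q (h : Hyp p q i) : Nat.Coprime i q := by
  have h1 : i % q = 1 % q := h.hmod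
  unfold Nat.Coprime
  rw [Nat.gcd_comm, Nat.gcd_rec, h1, ← Nat.gcd_rec, Nat.gcd_one_right]

theorem coprime_p (h : Hyp p q i) : Nat.Coprime i p := by
  haveI : NeZero p := ⟨h.hp.ne_zero⟩
  have hq1 : q - 1 + 1 = q := Nat.succ_pred_eq_of_pos h.hq.pos
  have hmul : (i : ZMod p) * (i : ZMod p) ^ (q - 1) = 1 := by
    rw [← pow_succ', hq1, ← h.hord, pow_orderOf_eq_one]
  exact (ZMod.isUnit_iff_coprime i p).mp (IsUnit.of_mul_eq_one _ hmul)

theorem coprime (h : Hyp p q i) : Nat.Coprime i (p * q) :=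
  Nat.Coprime.mul_right h.coprime_p h.coprime_q

theorem pow_q_modeq (h : Hyp p q i) : i ^ q ≡ 1 [MOD p * q] := by
  have hpq : p ≠ q := by
    have h1 : 0 < p - 1 := by have := h.hp.two_le; omega
    have := Nat.le_of_dvd h1 h.hdvd
    omega
  have hc : Nat.Coprime p q := (Nat.coprime_primes h.hp h.hq).mpr hpq
  rw [← Nat.modEq_and_modEq_iff_modEq_mul hc]
  constructor
  · haveI : NeZero p := ⟨h.hp.ne_zero⟩
    have hcast : ((i ^ q : ℕ) : ZMod p) = ((1 : ℕ) : ZMod p) := by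
      push_cast
      rw [← h.hord, pow_orderOf_eq_one]
    exact (ZMod.natCast_eq_natCast_iff _ _ _).mp hcast
  · calc i ^ q ≡ 1 ^ q [MOD q] := h.hmod.pow q
      _ = 1 := one_pow q

/-- The unit of `ZMod (p*q)` determined by `i`. -/
def unit (h : Hyp p q i) : (ZMod (p * q))ˣ := ZMod.unitOfCoprime i h.coprime

/-- The unit of `ZMod p` determined by `i`. -/
def unitP (h : Hyp p q i) : (ZMod p)ˣ := ZMod.unitOfCoprime i h.coprime_p

theorem unit_pow (h : Hyp p q i) : h.unit ^ q = 1 := by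
  apply Units.ext
  have h2 : ((i ^ q : ℕ) : ZMod (p * q)) = ((1 : ℕ) : ZMod (p * q)) :=
    (ZMod.natCast_eq_natCast_iff _ _ _).mpr h.pow_q_modeq
  push_cast at h2
  simpa [Hyp.unit] using h2

theorem unitP_pow (h : Hyp p q i) : h.unitP ^ q = 1 := by
  apply Units.ext
  have h2 : (i : ZMod p) ^ q = 1 := by rw [← h.hord]; exact pow_orderOf_eq_one _
  simpa [Hyp.unitP] using h2

end Hyp

/-- Multiplication by a unit, as an automorphism of the (multiplicatively written)
cyclic group `ZMod n`. -/
def zmodMulAut (n : ℕ) : (ZMod n)ˣ →* MulAut (Multiplicative (ZMod n)) where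
  toFun u :=
    { toFun := fun x => ofAdd ((u : ZMod n) * x.toAdd)
      invFun := fun x => ofAdd (((u⁻¹ : (ZMod n)ˣ) : ZMod n) * x.toAdd)
      left_inv := fun x => by simp
      right_inv := fun x => by simp
      map_mul' := fun x y => by simp [mul_add, ← ofAdd_add] }
  map_one' := by ext x; simp
  map_mul' u v := by ext x; simp [mul_assoc]

/-- The function underlying the automorphism of the dihedral group induced by
multiplication by a unit on the rotation part. -/
def dihedralAutFun (n : ℕ) (u : (ZMod n)ˣ) : DihedralGroup n → DihedralGroup n
  | .r j => .r ((u : ZMod n) * j)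
  | .sr j => .sr ((u : ZMod n) * j)

/-- Multiplication of indices by a unit, as an automorphism of the dihedral group:
`a ↦ a^u`, `b ↦ b`. -/
def dihedralAut (n : ℕ) : (ZMod n)ˣ →* MulAut (DihedralGroup n) where
  toFun u :=
    { toFun := dihedralAutFun n u
      invFun := dihedralAutFun n u⁻¹
      left_inv := fun x => by cases x <;> simp [dihedralAutFun]
      right_inv := fun x => by cases x <;> simp [dihedralAutFun]
      map_mul' := fun x y => by cases x <;> cases y <;> simp [dihedralAutFun, mul_add, mul_sub] }
  map_one' := by ext x; cases x <;> simp [dihedralAutFun]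
  map_mul' u v := by ext x; cases x <;> simp [dihedralAutFun, mul_assoc]

/-- The homomorphism `ZMod q →* G` (written multiplicatively) sending `1` to a fixed
element `g` with `g ^ q = 1`. -/
def zmodPow {G : Type*} [Group G] (q : ℕ) [NeZero q] (g : G) (hg : g ^ q = 1) :
    Multiplicative (ZMod q) →* G where
  toFun x := g ^ (toAdd x).val
  map_one' := by
    show g ^ (toAdd (1 : Multiplicative (ZMod q))).val = 1
    rw [toAdd_one, ZMod.val_zero, pow_zero]
  map_mul' x y := by
    have key : ∀ m : ℕ, g ^ (m % q) = g ^ m := fun m => by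
      conv_rhs => rw [← Nat.div_add_mod m q]
      rw [pow_add, pow_mul, hg, one_pow, one_mul]
    show g ^ (toAdd (x * y)).val = g ^ (toAdd x).val * g ^ (toAdd y).val
    rw [toAdd_mul, ZMod.val_add, key, pow_add]

namespace Hyp

variable {p q i : ℕ}

/-- The action of `C_q` on `C_{pq}` sending the generator to multiplication by `i`. -/
def phiN (h : Hyp p q i) : Multiplicative (ZMod q) →* MulAut (Multiplicative (ZMod (p * q))) :=
  haveI : NeZero q := ⟨h.hq.ne_zero⟩
  zmodPow q (zmodMulAut (p * q) h.unit) (by rw [← map_pow, h.unit_pow, map_one])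

/-- The action of `C_q` on `D_{2pq}` sending the generator to `τ` (`τ(a) = a^i`, `τ(b) = b`). -/
def phiG (h : Hyp p q i) : Multiplicative (ZMod q) →* MulAut (DihedralGroup (p * q)) :=
  haveI : NeZero q := ⟨h.hq.ne_zero⟩
  zmodPow q (dihedralAut (p * q) h.unit) (by rw [← map_pow, h.unit_pow, map_one])

/-- The action of `C_q` on `C_p` sending the generator to multiplication by `i`. -/
def phiF (h : Hyp p q i) : Multiplicative (ZMod q) →* MulAut (Multiplicative (ZMod p)) :=
  haveI : NeZero q := ⟨h.hq.ne_zero⟩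
  zmodPow q (zmodMulAut p h.unitP) (by rw [← map_pow, h.unitP_pow, map_one])

end Hyp

/-- The group `N_{pq²} = ⟨a, c ∣ a^{pq} = c^q = 1, c a c⁻¹ = a^i⟩ = C_{pq} ⋊ C_q`. -/
abbrev Npq2 {p q i : ℕ} (h : Hyp p q i) : Type :=
  Multiplicative (ZMod (p * q)) ⋊[h.phiN] Multiplicative (ZMod q)

/-- The group `G_{p,q} = D_{2pq} ⋊_φ C_q`. -/
abbrev Gpq {p q i : ℕ} (h : Hyp p q i) : Type :=
  DihedralGroup (p * q) ⋊[h.phiG] Multiplicative (ZMod q)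

/-- The Frobenius group `F_{p,q} = C_p ⋊ C_q` (the nonabelian group of order `pq`). -/
abbrev Fpq {p q i : ℕ} (h : Hyp p q i) : Type :=
  Multiplicative (ZMod p) ⋊[h.phiF] Multiplicative (ZMod q)

variable {p q i : ℕ}

/-- The generator `a` of `N_{pq²}`. -/
def aN (h : Hyp p q i) : Npq2 h := SemidirectProduct.inl (ofAdd 1)

/-- The generator `c` of `N_{pq²}`. -/
def cN (h : Hyp p q i) : Npq2 h := SemidirectProduct.inr (ofAdd 1)

/-- The generator `a` of `G_{p,q}`. -/
def aG (h : Hyp p q i) : Gpq h := SemidirectProduct.inl (DihedralGroup.r 1)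

/-- The generator `b` of `G_{p,q}`. -/
def bG (h : Hyp p q i) : Gpq h := SemidirectProduct.inl (DihedralGroup.sr 0)

/-- The generator `c` of `G_{p,q}`. -/
def cG (h : Hyp p q i) : Gpq h := SemidirectProduct.inr (ofAdd 1)

/-- The real conjugacy class `(g)^± = (g) ∪ (g⁻¹)`. -/
def realClass {G : Type*} [Group G] (g : G) : Set G := {x | IsConj g x ∨ IsConj g⁻¹ x}

/-- `N` is a normal subgroup whose quotient is an `ℓ`-group (the quotient has `ℓ`-power order,
i.e. `N` has `ℓ`-power index). -/
def OQuot {G : Type*} [Group G] (ℓ : ℕ) (N : Subgroup G) : Prop :=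
  N.Normal ∧ ∃ k : ℕ, N.index = ℓ ^ k

/-- `H` is a large subgroup of `G`: it contains `O^ℓ(G)`, the smallest normal subgroup
with `ℓ`-group quotient, for some prime `ℓ`. -/
def IsLarge {G : Type*} [Group G] (H : Subgroup G) : Prop :=
  ∃ ℓ : ℕ, Nat.Prime ℓ ∧
    ∃ N : Subgroup G, OQuot ℓ N ∧ (∀ M : Subgroup G, OQuot ℓ M → N ≤ M) ∧ N ≤ H

section Reps

variable {k : Type*} [CommSemiring k] {G : Type*} [Group G]

/-- The subspace `V^H` of `H`-fixed vectors of a representation. -/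
def fixedPts {V : Type*} [AddCommMonoid V] [Module k V]
    (ρ : Representation k G V) (H : Subgroup G) : Submodule k V where
  carrier := {v | ∀ g ∈ H, ρ g v = v}
  add_mem' := by
    intro a b ha hb g hg
    rw [map_add, ha g hg, hb g hg]
  zero_mem' := by
    intro g hg
    rw [map_zero]
  smul_mem' := by
    intro c v hv g hg
    rw [map_smul, hv g hg]

end Reps

/-- The weak gap condition for a real representation: `dim V^P ≥ 2 dim V^H` for all
`P < H ≤ G` with `P` of prime power order. -/
def WeakGap {G : Type*} [Group G] {V : Type*} [AddCommGroup V] [Module ℝ V]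
    (ρ : Representation ℝ G V) : Prop :=
  ∀ P H : Subgroup G, P < H → (∃ ℓ k : ℕ, Nat.Prime ℓ ∧ Nat.card P = ℓ ^ k) →
    2 * Module.finrank ℝ (fixedPts ρ H) ≤ Module.finrank ℝ (fixedPts ρ P)

/-- Isomorphism of real representations: an equivariant linear equivalence. -/
def RepIso {G : Type*} [Group G] {U V : Type*} [AddCommGroup U] [Module ℝ U]
    [AddCommGroup V] [Module ℝ V]
    (ρU : Representation ℝ G U) (ρV : Representation ℝ G V) : Prop :=
  ∃ e : U ≃ₗ[ℝ] V, ∀ (g : G) (u : U), e (ρU g u) = ρV g (e u)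

/-- Two real representations are `𝒫`-matched if their restrictions to every subgroup of
prime power order are isomorphic. -/
def PMatched {G : Type*} [Group G] {U V : Type*} [AddCommGroup U] [Module ℝ U]
    [AddCommGroup V] [Module ℝ V]
    (ρU : Representation ℝ G U) (ρV : Representation ℝ G V) : Prop :=
  ∀ P : Subgroup G, (∃ ℓ k : ℕ, Nat.Prime ℓ ∧ Nat.card P = ℓ ^ k) →
    RepIso (ρU.comp P.subtype) (ρV.comp P.subtype)

/-- A bundled finite-dimensional-free real representation of `G`. -/
structure RealRep (G : Type*) [Group G] where
  carrier : Type
  [acg : AddCommGroup carrier]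
  [mod : Module ℝ carrier]
  rho : Representation ℝ G carrier

attribute [instance] RealRep.acg RealRep.mod

theorem dihedralAut_pow_r (n : ℕ) (u : (ZMod n)ˣ) (k : ℕ) (m : ZMod n) :
    ((dihedralAut n u) ^ k) (DihedralGroup.r m)
      = DihedralGroup.r (((u ^ k : (ZMod n)ˣ) : ZMod n) * m) := by
  induction k generalizing m with
  | zero => simp
  | succ k ih =>
    rw [pow_succ, MulAut.mul_apply]
    have h1 : (dihedralAut n u) (DihedralGroup.r m) = DihedralGroup.r ((u : ZMod n) * m) := rfl
    rw [h1, ih, pow_succ, Units.val_mul, mul_assoc]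

theorem Hyp.phiG_r (h : Hyp p q i) (z : Multiplicative (ZMod q)) (m : ZMod (p * q)) :
    h.phiG z (DihedralGroup.r m)
      = DihedralGroup.r (((h.unit ^ (toAdd z).val : (ZMod (p * q))ˣ) : ZMod (p * q)) * m) := by
  have h1 : h.phiG z = (dihedralAut (p * q) h.unit) ^ (toAdd z).val := rfl
  rw [h1, dihedralAut_pow_r]

theorem r_inv (n : ℕ) (m : ZMod n) : (DihedralGroup.r m)⁻¹ = DihedralGroup.r (-m) := rfl

/-- The subgroup `N_{pq²} = {(aˡ, cᵐ)}` of `G_{p,q}`. -/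
def NSub (h : Hyp p q i) : Subgroup (Gpq h) where
  carrier := {x | ∃ l : ZMod (p * q), x.left = DihedralGroup.r l}
  one_mem' := ⟨0, rfl⟩
  mul_mem' := by
    rintro x y ⟨lx, hx⟩ ⟨ly, hy⟩
    refine ⟨lx + (h.unit ^ (toAdd x.right).val : (ZMod (p * q))ˣ) * ly, ?_⟩
    rw [SemidirectProduct.mul_left, hx, hy, h.phiG_r, DihedralGroup.r_mul_r]
  inv_mem' := by
    rintro x ⟨lx, hx⟩
    refine ⟨-((h.unit ^ (toAdd x.right⁻¹).val : (ZMod (p * q))ˣ) * lx), ?_⟩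
    rw [SemidirectProduct.inv_left, hx, r_inv, h.phiG_r]
    congr 1
    ring

/-- The subgroup `N_{2pq} = {(bᵉaˡ, 1)} ≅ D_{2pq}` of `G_{p,q}`. -/
def N2pqSub (h : Hyp p q i) : Subgroup (Gpq h) :=
  MonoidHom.ker SemidirectProduct.rightHom

/-- The subgroup `N¹_{pq} = {(aˡ, 1)}` of `G_{p,q}`. -/
def NpqOneSub (h : Hyp p q i) : Subgroup (Gpq h) where
  carrier := {x | x.right = 1 ∧ ∃ l : ZMod (p * q), x.left = DihedralGroup.r l}
  one_mem' := ⟨rfl, 0, rfl⟩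
  mul_mem' := by
    rintro x y ⟨hx1, lx, hx⟩ ⟨hy1, ly, hy⟩
    refine ⟨by rw [SemidirectProduct.mul_right, hx1, hy1, mul_one],
      lx + (h.unit ^ (toAdd x.right).val : (ZMod (p * q))ˣ) * ly, ?_⟩
    rw [SemidirectProduct.mul_left, hx, hy, h.phiG_r, DihedralGroup.r_mul_r]
  inv_mem' := by
    rintro x ⟨hx1, lx, hx⟩
    refine ⟨by rw [SemidirectProduct.inv_right, hx1, inv_one],
      -((h.unit ^ (toAdd x.right⁻¹).val : (ZMod (p * q))ˣ) * lx), ?_⟩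
    rw [SemidirectProduct.inv_left, hx, r_inv, h.phiG_r]
    congr 1
    ring

/-- The subgroup `N²_{pq} = {(a^{qs}, cᵐ)}` of `G_{p,q}`. -/
def NpqTwoSub (h : Hyp p q i) : Subgroup (Gpq h) where
  carrier := {x | ∃ s : ZMod (p * q), x.left = DihedralGroup.r ((q : ZMod (p * q)) * s)}
  one_mem' := ⟨0, by rw [mul_zero] <;> rfl⟩
  mul_mem' := by
    rintro x y ⟨sx, hx⟩ ⟨sy, hy⟩
    refine ⟨sx + (h.unit ^ (toAdd x.right).val : (ZMod (p * q))ˣ) * sy, ?_⟩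
    rw [SemidirectProduct.mul_left, hx, hy, h.phiG_r, DihedralGroup.r_mul_r]
    congr 1
    ring
  inv_mem' := by
    rintro x ⟨sx, hx⟩
    refine ⟨-((h.unit ^ (toAdd x.right⁻¹).val : (ZMod (p * q))ˣ) * sx), ?_⟩
    rw [SemidirectProduct.inv_left, hx, r_inv, h.phiG_r]
    congr 1
    ring

/-- The subgroup `N_p = {(a^{qs}, 1)}` of `G_{p,q}`. -/
def NpSub (h : Hyp p q i) : Subgroup (Gpq h) where
  carrier := {x | x.right = 1 ∧ ∃ s : ZMod (p * q), x.left = DihedralGroup.r ((q : ZMod (p * q)) * s)}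
  one_mem' := ⟨rfl, 0, by rw [mul_zero] <;> rfl⟩
  mul_mem' := by
    rintro x y ⟨hx1, sx, hx⟩ ⟨hy1, sy, hy⟩
    refine ⟨by rw [SemidirectProduct.mul_right, hx1, hy1, mul_one],
      sx + (h.unit ^ (toAdd x.right).val : (ZMod (p * q))ˣ) * sy, ?_⟩
    rw [SemidirectProduct.mul_left, hx, hy, h.phiG_r, DihedralGroup.r_mul_r]
    congr 1
    ring
  inv_mem' := by
    rintro x ⟨hx1, sx, hx⟩
    refine ⟨by rw [SemidirectProduct.inv_right, hx1, inv_one],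
      -((h.unit ^ (toAdd x.right⁻¹).val : (ZMod (p * q))ˣ) * sx), ?_⟩
    rw [SemidirectProduct.inv_left, hx, r_inv, h.phiG_r]
    congr 1
    ring

/-- The subgroup `N_q = {(a^{ps}, 1)}` of `G_{p,q}`. -/
def NqSub (h : Hyp p q i) : Subgroup (Gpq h) where
  carrier := {x | x.right = 1 ∧ ∃ s : ZMod (p * q), x.left = DihedralGroup.r ((p : ZMod (p * q)) * s)}
  one_mem' := ⟨rfl, 0, by rw [mul_zero] <;> rfl⟩
  mul_mem' := by
    rintro x y ⟨hx1, sx, hx⟩ ⟨hy1, sy, hy⟩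
    refine ⟨by rw [SemidirectProduct.mul_right, hx1, hy1, mul_one],
      sx + (h.unit ^ (toAdd x.right).val : (ZMod (p * q))ˣ) * sy, ?_⟩
    rw [SemidirectProduct.mul_left, hx, hy, h.phiG_r, DihedralGroup.r_mul_r]
    congr 1
    ring
  inv_mem' := by
    rintro x ⟨hx1, sx, hx⟩
    refine ⟨by rw [SemidirectProduct.inv_right, hx1, inv_one],
      -((h.unit ^ (toAdd x.right⁻¹).val : (ZMod (p * q))ˣ) * sx), ?_⟩
    rw [SemidirectProduct.inv_left, hx, r_inv, h.phiG_r]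
    congr 1
    ring

end Mizerka

/-!
A normal subgroup `N` of `G = D_{2pq} ⋊ C_q` is determined by three invariants: the ideal
`R = {l | aˡ ∈ N}` of `ZMod (pq)`, the subgroup `C = {z | c^z ∈ N}` of `C_q`, and whether `b ∈ N`.
Indeed `b (aˡ c^z) b⁻¹ (aˡ c^z)⁻¹ = a^{-2l}` and `2` is invertible mod `pq`, so `aˡ c^z ∈ N` iff
`l ∈ R` and `z ∈ C`; likewise `b aᵏ c^z ∈ N` iff `b ∈ N` and `z ∈ C`, because `(b c^z)² = c^{2z}`
and `c` has odd order. By the Chinese remainder theorem `R` is one of `0, (p), (q), (1)`, and `C`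
is trivial or everything. A reflection in `N` has commutator `a^{1 + i^z}` with `a`, and
`1 + i^z` is a unit mod `pq`, so `b ∈ N` forces `R = (1)`; if `c ∈ N` then `a^{1 - i} ∈ N` with
`1 - i ≢ 0 (mod p)`, which forces `(q) ⊆ R`. The eight surviving triples give `1`, `G` and the six
listed subgroups. The isomorphisms come from the Chinese remainder embeddings of `ZMod p` and
`ZMod q` into `ZMod (pq)`, which intertwine multiplication by `i`.
-/

theorem Subgroup.mem_of_sq_mem {G : Type*} [Group G] (H : Subgroup G) {g : G} {n : ℕ}
    (hn : Odd n) (hg : g ^ n = 1) (hsq : g ^ 2 ∈ H) : g ∈ H := by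
  obtain ⟨k, rfl⟩ := hn
  have hg' : (g ^ 2) ^ (k + 1) = g := by
    rw [← pow_mul, show 2 * (k + 1) = 2 * k + 1 + 1 by ring, pow_succ, hg, one_mul]
  exact hg' ▸ H.pow_mem hsq (k + 1)

theorem MonoidHom.nonempty_mulEquiv_of_range_eq {G H : Type*} [Group G] [Group H]
    {S : Subgroup G} {f : H →* G} (hf : Function.Injective f) (hS : f.range = S) :
    Nonempty (S ≃* H) :=
  ⟨((MonoidHom.ofInjective hf).trans (MulEquiv.subgroupCongr hS)).symm⟩

namespace SemidirectProduct

variable {N : Type*} [Group N]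

theorem exists_iff {G : Type*} [Group G] {φ : G →* MulAut N} {P : N ⋊[φ] G → Prop} :
    (∃ x, P x) ↔ ∃ n g, P ⟨n, g⟩ :=
  ⟨fun ⟨x, hx⟩ => ⟨x.left, x.right, hx⟩, fun ⟨_, _, hP⟩ => ⟨_, hP⟩⟩

theorem mk_mul_mk_mul_inv_of_comm {G : Type*} [CommGroup G] {φ : G →* MulAut N}
    (n₁ n₂ : N) (g₁ g₂ : G) :
    (⟨n₁, g₁⟩ : N ⋊[φ] G) * ⟨n₂, g₂⟩ * (⟨n₁, g₁⟩ : N ⋊[φ] G)⁻¹ =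
      ⟨n₁ * φ g₁ n₂ * φ g₂ n₁⁻¹, g₂⟩ := by
  have hg : g₁ * g₂ * g₁⁻¹ = g₂ := mul_inv_cancel_comm g₁ g₂
  ext
  · simp only [mul_left, mul_right, inv_left]
    rw [← MulAut.mul_apply, ← map_mul, hg]
  · exact hg

end SemidirectProduct

namespace ZMod

theorem two_ne_zero_of_ne_two {n : ℕ} [Fact n.Prime] (hn : n ≠ 2) : (2 : ZMod n) ≠ 0 :=
  Ring.two_ne_zero (by rwa [ringChar_zmod_n])

theorem cast_eq_zero_iff_exists_eq_mul {m n : ℕ} [NeZero n] (hmn : m ∣ n) (l : ZMod n) :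
    (l.cast : ZMod m) = 0 ↔ ∃ s, l = m * s := by
  constructor
  · intro h0
    rw [← natCast_val, natCast_eq_zero_iff] at h0
    obtain ⟨c, hc⟩ := h0
    exact ⟨c, by rw [← natCast_zmod_val l, hc, Nat.cast_mul]⟩
  · rintro ⟨s, rfl⟩
    rw [cast_mul hmn, cast_natCast hmn, natCast_self, zero_mul]

section ChineseRemainder

variable {m n : ℕ} (hmn : m.Coprime n)

theorem chineseRemainder_fst (x : ZMod (m * n)) :
    (chineseRemainder hmn x).1 = castHom (dvd_mul_right m n) (ZMod m) x :=
  RingHom.congr_fun (RingHom.ext_zmod ((RingHom.fst _ _).comp (chineseRemainder hmn).toRingHom) _) x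

theorem chineseRemainder_snd (x : ZMod (m * n)) :
    (chineseRemainder hmn x).2 = castHom (dvd_mul_left n m) (ZMod n) x :=
  RingHom.congr_fun (RingHom.ext_zmod ((RingHom.snd _ _).comp (chineseRemainder hmn).toRingHom) _) x

-- `crtInl x` is the residue that is `x` mod `m` and `0` mod `n`; `crtInr` is its mirror image.
def crtInl : ZMod m →+ ZMod (m * n) :=
  (chineseRemainder hmn).symm.toRingHom.toAddMonoidHom.comp (AddMonoidHom.inl _ _)

def crtInr : ZMod n →+ ZMod (m * n) :=
  (chineseRemainder hmn).symm.toRingHom.toAddMonoidHom.comp (AddMonoidHom.inr _ _)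

theorem crtInl_injective : Function.Injective (crtInl hmn) :=
  (chineseRemainder hmn).symm.injective.comp (Prod.mk_left_injective 0)

theorem crtInr_injective : Function.Injective (crtInr hmn) :=
  (chineseRemainder hmn).symm.injective.comp (Prod.mk_right_injective 0)

theorem exists_crtInl_eq_iff (l : ZMod (m * n)) :
    (∃ x, crtInl hmn x = l) ↔ (l.cast : ZMod n) = 0 := by
  constructor
  · rintro ⟨x, rfl⟩
    rw [← castHom_apply (h := dvd_mul_left n m), ← chineseRemainder_snd hmn]
    simp [crtInl]
  · intro hl
    refine ⟨l.cast, (chineseRemainder hmn).symm_apply_eq.mpr ?_⟩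
    ext
    · simp [chineseRemainder_fst]
    · simp [chineseRemainder_snd, hl]

theorem exists_crtInr_eq_iff (l : ZMod (m * n)) :
    (∃ x, crtInr hmn x = l) ↔ (l.cast : ZMod m) = 0 := by
  constructor
  · rintro ⟨x, rfl⟩
    rw [← castHom_apply (h := dvd_mul_right m n), ← chineseRemainder_fst hmn]
    simp [crtInr]
  · intro hl
    refine ⟨l.cast, (chineseRemainder hmn).symm_apply_eq.mpr ?_⟩
    ext
    · simp [chineseRemainder_fst, hl]
    · simp [chineseRemainder_snd]

theorem crtInl_cast_mul (y : ZMod (m * n)) (x : ZMod m) :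
    crtInl hmn ((y.cast : ZMod m) * x) = y * crtInl hmn x := by
  have hy : ((y.cast : ZMod m) * x, (0 : ZMod n)) = chineseRemainder hmn y * (x, 0) := by
    ext <;> simp [chineseRemainder_fst]
  show (chineseRemainder hmn).symm (_, 0) = y * (chineseRemainder hmn).symm (x, 0)
  rw [hy, map_mul, RingEquiv.symm_apply_apply]

end ChineseRemainder

variable {p q : ℕ} [Fact p.Prime] [Fact q.Prime]

theorem isUnit_iff_castHom_ne_zero (hpq : p ≠ q) (x : ZMod (p * q)) :
    IsUnit x ↔
      castHom (dvd_mul_right p q) (ZMod p) x ≠ 0 ∧ castHom (dvd_mul_left q p) (ZMod q) x ≠ 0 := by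
  have hcop := (Nat.coprime_primes Fact.out Fact.out).mpr hpq
  rw [← isUnit_map_iff (chineseRemainder hcop), Prod.isUnit_iff, isUnit_iff_ne_zero,
    isUnit_iff_ne_zero, chineseRemainder_fst, chineseRemainder_snd]

theorem ideal_eq_bot_or_ker_or_ker_or_top (hpq : p ≠ q) (I : Ideal (ZMod (p * q))) :
    I = ⊥ ∨ I = RingHom.ker (castHom (dvd_mul_right p q) (ZMod p)) ∨
      I = RingHom.ker (castHom (dvd_mul_left q p) (ZMod q)) ∨ I = ⊤ := by
  have hcop := (Nat.coprime_primes Fact.out Fact.out).mpr hpq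
  set e := chineseRemainder hcop
  have hI : I = (I.map e).comap e := (Ideal.comap_map_of_bijective e e.bijective).symm
  rw [Ideal.ideal_prod_eq (I.map e)] at hI
  -- the ideals of `ZMod p × ZMod q` are products of ideals of the two fields
  rcases Ideal.eq_bot_or_top (Ideal.map (RingHom.fst _ _) (I.map e)) with h1 | h1 <;>
  rcases Ideal.eq_bot_or_top (Ideal.map (RingHom.snd _ _) (I.map e)) with h2 | h2 <;>
  rw [h1, h2] at hI <;> rw [hI]
  · left
    ext x
    simp [e]
  · right; left
    ext x
    simp [Ideal.mem_prod, e, chineseRemainder_fst]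
  · right; right; left
    ext x
    simp [Ideal.mem_prod, e, chineseRemainder_snd]
  · right; right; right
    ext x
    simp

end ZMod

namespace Mizerka

open DihedralGroup SemidirectProduct

variable {p q i : ℕ}

local notation "πp" => ZMod.castHom (dvd_mul_right p q) (ZMod p)
local notation "πq" => ZMod.castHom (dvd_mul_left q p) (ZMod q)

namespace Hyp

theorem p_ne_q (h : Hyp p q i) : p ≠ q := by
  have := Nat.le_of_dvd (Nat.sub_pos_of_lt h.hp.one_lt) h.hdvd
  have := h.hq.pos
  omega

theorem p_ne_two (h : Hyp p q i) : p ≠ 2 := by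
  rintro rfl
  exact absurd h.hoddp (by decide)

theorem q_ne_two (h : Hyp p q i) : q ≠ 2 := by
  rintro rfl
  exact absurd h.hoddq (by decide)

theorem coprime_p_q (h : Hyp p q i) : p.Coprime q :=
  (Nat.coprime_primes h.hp h.hq).mpr h.p_ne_q

theorem neZero (h : Hyp p q i) : NeZero (p * q) :=
  ⟨Nat.mul_ne_zero h.hp.ne_zero h.hq.ne_zero⟩

theorem natCast_eq_one_zmod_q (h : Hyp p q i) : (i : ZMod q) = 1 := by
  simpa using (ZMod.natCast_eq_natCast_iff _ _ _).mpr h.hmod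

theorem pow_ne_neg_one (h : Hyp p q i) (m : ℕ) : (i : ZMod p) ^ m ≠ -1 := by
  have : Fact p.Prime := ⟨h.hp⟩
  intro h1
  have h2 := orderOf_pow_dvd (x := (i : ZMod p)) m
  rw [h1, orderOf_neg_one, ZMod.ringChar_zmod_n, if_neg h.p_ne_two, h.hord] at h2
  exact Nat.not_even_iff_odd.mpr h.hoddq (even_iff_two_dvd.mpr h2)

theorem isUnit_one_add_pow (h : Hyp p q i) (m : ℕ) : IsUnit (1 + (i : ZMod (p * q)) ^ m) := by
  have : Fact p.Prime := ⟨h.hp⟩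
  have : Fact q.Prime := ⟨h.hq⟩
  rw [ZMod.isUnit_iff_castHom_ne_zero h.p_ne_q]
  simp only [map_add, map_one, map_pow, map_natCast, h.natCast_eq_one_zmod_q]
  refine ⟨fun h0 => h.pow_ne_neg_one m (by linear_combination h0), ?_⟩
  rw [one_pow, one_add_one_eq_two]
  exact ZMod.two_ne_zero_of_ne_two h.q_ne_two

theorem isUnit_two (h : Hyp p q i) : IsUnit (2 : ZMod (p * q)) := by
  have : Fact p.Prime := ⟨h.hp⟩
  have : Fact q.Prime := ⟨h.hq⟩
  rw [ZMod.isUnit_iff_castHom_ne_zero h.p_ne_q, map_ofNat, map_ofNat]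
  exact ⟨ZMod.two_ne_zero_of_ne_two h.p_ne_two, ZMod.two_ne_zero_of_ne_two h.q_ne_two⟩

theorem castHom_one_sub_ne_zero (h : Hyp p q i) : πp (1 - i) ≠ 0 := by
  rw [map_sub, map_one, map_natCast, sub_ne_zero]
  intro h1
  have := h.hord
  rw [← h1, orderOf_one] at this
  exact h.hq.one_lt.ne this

theorem castHom_one_sub_pow (h : Hyp p q i) (m : ℕ) : πq (1 - i ^ m) = 0 := by
  rw [map_sub, map_one, map_pow, map_natCast, h.natCast_eq_one_zmod_q, one_pow, sub_self]

theorem natCast_q_ne_zero (h : Hyp p q i) : (q : ZMod (p * q)) ≠ 0 := by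
  refine ne_zero_of_map (f := πp) ?_
  rw [map_natCast, Ne, ZMod.natCast_eq_zero_iff, Nat.prime_dvd_prime_iff_eq h.hp h.hq]
  exact h.p_ne_q

theorem natCast_p_ne_zero (h : Hyp p q i) : (p : ZMod (p * q)) ≠ 0 := by
  refine ne_zero_of_map (f := πq) ?_
  rw [map_natCast, Ne, ZMod.natCast_eq_zero_iff, Nat.prime_dvd_prime_iff_eq h.hq h.hp]
  exact h.p_ne_q.symm

end Hyp

section Actions

@[simp]
theorem dihedralAut_apply_r (n : ℕ) (u : (ZMod n)ˣ) (m : ZMod n) :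
    dihedralAut n u (r m) = r ((u : ZMod n) * m) := rfl

@[simp]
theorem dihedralAut_apply_sr (n : ℕ) (u : (ZMod n)ˣ) (m : ZMod n) :
    dihedralAut n u (sr m) = sr ((u : ZMod n) * m) := rfl

@[simp]
theorem zmodMulAut_apply (n : ℕ) (u : (ZMod n)ˣ) (x : Multiplicative (ZMod n)) :
    zmodMulAut n u x = ofAdd ((u : ZMod n) * toAdd x) := rfl

namespace Hyp

@[simp]
theorem coe_unit_pow (h : Hyp p q i) (k : ℕ) :
    ((h.unit ^ k : (ZMod (p * q))ˣ) : ZMod (p * q)) = (i : ZMod (p * q)) ^ k := by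
  simp [Hyp.unit]

@[simp]
theorem phiG_apply_r (h : Hyp p q i) (z : Multiplicative (ZMod q)) (m : ZMod (p * q)) :
    h.phiG z (r m) = r ((i : ZMod (p * q)) ^ (toAdd z).val * m) := by
  rw [show h.phiG z = dihedralAut (p * q) (h.unit ^ (toAdd z).val) from (map_pow _ _ _).symm,
    dihedralAut_apply_r, coe_unit_pow]

@[simp]
theorem phiG_apply_sr (h : Hyp p q i) (z : Multiplicative (ZMod q)) (m : ZMod (p * q)) :
    h.phiG z (sr m) = sr ((i : ZMod (p * q)) ^ (toAdd z).val * m) := by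
  rw [show h.phiG z = dihedralAut (p * q) (h.unit ^ (toAdd z).val) from (map_pow _ _ _).symm,
    dihedralAut_apply_sr, coe_unit_pow]

theorem phiF_apply (h : Hyp p q i) (z : Multiplicative (ZMod q)) (x : Multiplicative (ZMod p)) :
    h.phiF z x = ofAdd ((i : ZMod p) ^ (toAdd z).val * toAdd x) := by
  rw [show h.phiF z = zmodMulAut p (h.unitP ^ (toAdd z).val) from (map_pow _ _ _).symm,
    zmodMulAut_apply, Units.val_pow_eq_pow_val]
  rfl

theorem crtInl_pow_mul (h : Hyp p q i) (k : ℕ) (x : ZMod p) :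
    ZMod.crtInl h.coprime_p_q ((i : ZMod p) ^ k * x) =
      (i : ZMod (p * q)) ^ k * ZMod.crtInl h.coprime_p_q x := by
  have := ZMod.crtInl_cast_mul h.coprime_p_q ((i : ZMod (p * q)) ^ k) x
  rwa [← ZMod.castHom_apply (h := dvd_mul_right p q), map_pow, map_natCast] at this

end Hyp

end Actions

def rHom (n : ℕ) : Multiplicative (ZMod n) →* DihedralGroup n where
  toFun x := r x.toAdd
  map_one' := rfl
  map_mul' _ _ := (r_mul_r _ _).symm

@[simp]
theorem rHom_apply (n : ℕ) (x : Multiplicative (ZMod n)) : rHom n x = r (toAdd x) := rfl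

theorem rHom_injective (n : ℕ) : Function.Injective (rHom n) := fun _ _ hxy => r.inj hxy

/-- The exponents `l` with `aˡ ∈ N` (an additive subgroup of `ZMod n` is automatically an ideal). -/
def rotIdeal {h : Hyp p q i} (N : Subgroup (Gpq h)) : Ideal (ZMod (p * q)) :=
  AddSubgroup.toZModSubmodule (p * q)
    (Subgroup.toAddSubgroup' (N.comap (inl.comp (rHom (p * q)))))

@[simp]
theorem mem_rotIdeal {h : Hyp p q i} {N : Subgroup (Gpq h)} {l : ZMod (p * q)} :
    l ∈ rotIdeal N ↔ (⟨r l, 1⟩ : Gpq h) ∈ N := Iff.rfl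

section NormalSubgroup

variable {h : Hyp p q i} {N : Subgroup (Gpq h)}

theorem mem_rotIdeal_of_mk_r_mem (hN : N.Normal) {l : ZMod (p * q)} {z : Multiplicative (ZMod q)}
    (hx : (⟨r l, z⟩ : Gpq h) ∈ N) : l ∈ rotIdeal N := by
  have hconj : (⟨r (-2 * l), 1⟩ : Gpq h) ∈ N := by
    convert N.mul_mem (hN.conj_mem _ hx (bG h)) (N.inv_mem hx) using 1
    ext <;> simp [bG]
    ring
  exact (Ideal.unit_mul_mem_iff_mem _ h.isUnit_two.neg).mp hconj

theorem mk_r_mem_iff (hN : N.Normal) {l : ZMod (p * q)} {z : Multiplicative (ZMod q)} :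
    (⟨r l, z⟩ : Gpq h) ∈ N ↔ l ∈ rotIdeal N ∧ z ∈ N.comap inr := by
  have hsplit : (⟨r l, z⟩ : Gpq h) = ⟨r l, 1⟩ * inr z := by ext <;> simp
  refine ⟨fun hx => ⟨mem_rotIdeal_of_mk_r_mem hN hx, ?_⟩,
    fun ⟨hl, hz⟩ => hsplit ▸ N.mul_mem hl hz⟩
  rw [Subgroup.mem_comap, ← inv_mul_eq_iff_eq_mul.mpr hsplit]
  exact N.mul_mem (N.inv_mem (mem_rotIdeal_of_mk_r_mem hN hx)) hx

theorem rotIdeal_eq_top_of_mk_sr_mem (hN : N.Normal) {k : ZMod (p * q)}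
    {z : Multiplicative (ZMod q)} (hx : (⟨sr k, z⟩ : Gpq h) ∈ N) : rotIdeal N = ⊤ := by
  have hcomm : (⟨r (1 + (i : ZMod (p * q)) ^ (toAdd z).val), 1⟩ : Gpq h) ∈ N := by
    convert N.mul_mem (hN.conj_mem _ hx (aG h)) (N.inv_mem hx) using 1
    ext <;> simp [aG]
    ring
  exact Ideal.eq_top_of_isUnit_mem _ hcomm (h.isUnit_one_add_pow _)

theorem mk_sr_mem_iff (hN : N.Normal) {k : ZMod (p * q)} {z : Multiplicative (ZMod q)} :
    (⟨sr k, z⟩ : Gpq h) ∈ N ↔ bG h ∈ N ∧ z ∈ N.comap inr := by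
  constructor
  · intro hx
    have hrot : ∀ l, (⟨r l, 1⟩ : Gpq h) ∈ N := fun l =>
      mem_rotIdeal.mp (rotIdeal_eq_top_of_mk_sr_mem hN hx ▸ Submodule.mem_top)
    have h0 : (⟨sr 0, z⟩ : Gpq h) ∈ N := by
      convert N.mul_mem (hrot k) hx using 1
      ext <;> simp
    have hz : z ∈ N.comap inr := by
      refine (N.comap inr).mem_of_sq_mem h.hoddq (toAdd.injective (by simp)) ?_
      show inr (z ^ 2) ∈ N
      convert N.mul_mem h0 h0 using 1
      ext <;> simp [pow_two]
    refine ⟨?_, hz⟩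
    convert N.mul_mem h0 (N.inv_mem hz) using 1
    ext <;> simp [bG]
  · rintro ⟨hb, hz⟩
    have hrot := rotIdeal_eq_top_of_mk_sr_mem hN (show (⟨sr 0, 1⟩ : Gpq h) ∈ N from hb)
    convert N.mul_mem (N.mul_mem (mem_rotIdeal.mp (hrot ▸ Submodule.mem_top : -k ∈ rotIdeal N))
      hb) hz using 1
    ext <;> simp [bG]

theorem one_sub_mem_rotIdeal (hN : N.Normal) (hc : cG h ∈ N) :
    1 - (i : ZMod (p * q)) ∈ rotIdeal N := by
  have : Fact (1 < q) := ⟨h.hq.one_lt⟩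
  rw [mem_rotIdeal]
  convert N.mul_mem (hN.conj_mem _ hc (aG h)) (N.inv_mem hc) using 1
  ext <;> simp [aG, cG, ZMod.val_one, sub_eq_add_neg]

theorem comap_inr_eq_bot_or_eq_top (N : Subgroup (Gpq h)) : N.comap inr = ⊥ ∨ N.comap inr = ⊤ :=
  have : Fact q.Prime := ⟨h.hq⟩
  have : Fact (Nat.card (Multiplicative (ZMod q))).Prime := ⟨by simpa using h.hq⟩
  Subgroup.eq_bot_or_eq_top_of_prime_card _

theorem eq_N2pqSub_or_eq_top_of_bG_mem (hN : N.Normal) (hb : bG h ∈ N) :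
    N = N2pqSub h ∨ N = ⊤ := by
  have hR : rotIdeal N = ⊤ := rotIdeal_eq_top_of_mk_sr_mem hN hb
  rcases comap_inr_eq_bot_or_eq_top N with hC | hC
  · left
    ext ⟨x, z⟩
    -- `simp only` first: `simp` would rewrite `⟨x, z⟩` to `inl x * inr z` before using them
    cases x <;> simp only [mk_r_mem_iff hN, mk_sr_mem_iff hN] <;> simp [hR, hC, hb, N2pqSub]
  · right
    ext ⟨x, z⟩
    cases x <;> simp only [mk_r_mem_iff hN, mk_sr_mem_iff hN] <;> simp [hR, hC, hb]

theorem eq_bot_or_eq_of_bG_not_mem (hN : N.Normal) (hb : bG h ∉ N) :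
    N = ⊥ ∨ N = NpSub h ∨ N = NqSub h ∨ N = NpqOneSub h ∨ N = NpqTwoSub h ∨ N = NSub h := by
  have : Fact p.Prime := ⟨h.hp⟩
  have : Fact q.Prime := ⟨h.hq⟩
  have := h.neZero
  have hR := ZMod.ideal_eq_bot_or_ker_or_ker_or_top h.p_ne_q (rotIdeal N)
  rcases comap_inr_eq_bot_or_eq_top N with hC | hC
  · rcases hR with hR | hR | hR | hR
    · left
      ext ⟨x, z⟩
      cases x <;> simp only [mk_r_mem_iff hN, mk_sr_mem_iff hN] <;>
        simp [hR, hC, hb, SemidirectProduct.ext_iff, ← r_zero]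
    · right; right; left
      ext ⟨x, z⟩
      cases x <;> simp only [mk_r_mem_iff hN, mk_sr_mem_iff hN] <;>
        simp [hR, hC, hb, NqSub, ZMod.cast_eq_zero_iff_exists_eq_mul, and_comm]
    · right; left
      ext ⟨x, z⟩
      cases x <;> simp only [mk_r_mem_iff hN, mk_sr_mem_iff hN] <;>
        simp [hR, hC, hb, NpSub, ZMod.cast_eq_zero_iff_exists_eq_mul, and_comm]
    · right; right; right; left
      ext ⟨x, z⟩
      cases x <;> simp only [mk_r_mem_iff hN, mk_sr_mem_iff hN] <;> simp [hR, hC, hb, NpqOneSub]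
  · -- `c ∈ N` puts `1 - i`, which is nonzero mod `p`, into `R`; this rules out `R = 0, (p)`
    have hsub := one_sub_mem_rotIdeal hN (Subgroup.mem_comap.mp (hC ▸ Subgroup.mem_top _))
    rcases hR with hR | hR | hR | hR
    · rw [hR, Ideal.mem_bot] at hsub
      exact absurd (by rw [hsub, map_zero]) h.castHom_one_sub_ne_zero
    · exact absurd (RingHom.mem_ker.mp (hR ▸ hsub)) h.castHom_one_sub_ne_zero
    · right; right; right; right; left
      ext ⟨x, z⟩
      cases x <;> simp only [mk_r_mem_iff hN, mk_sr_mem_iff hN] <;>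
        simp [hR, hC, hb, NpqTwoSub, ZMod.cast_eq_zero_iff_exists_eq_mul]
    · right; right; right; right; right
      ext ⟨x, z⟩
      cases x <;> simp only [mk_r_mem_iff hN, mk_sr_mem_iff hN] <;> simp [hR, hC, hb, NSub]

theorem eq_bot_or_eq_top_or_mem_of_normal (hN : N.Normal) :
    N = ⊥ ∨ N = ⊤ ∨ N ∈ ({NpSub h, NqSub h, NpqOneSub h, NpqTwoSub h, N2pqSub h, NSub h} :
      Set (Subgroup (Gpq h))) := by
  by_cases hb : bG h ∈ N
  · rcases eq_N2pqSub_or_eq_top_of_bG_mem hN hb with rfl | rfl <;> simp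
  · rcases eq_bot_or_eq_of_bG_not_mem hN hb with rfl | rfl | rfl | rfl | rfl | rfl <;> simp

end NormalSubgroup

section SixSubgroups

variable {h : Hyp p q i}

theorem exists_conj_mk_r (g : Gpq h) (l : ZMod (p * q)) (z : Multiplicative (ZMod q)) :
    ∃ u k : ZMod (p * q),
      g * ⟨r l, z⟩ * g⁻¹ = ⟨r (u * l + (1 - (i : ZMod (p * q)) ^ (toAdd z).val) * k), z⟩ := by
  obtain ⟨y, w⟩ := g
  rw [mk_mul_mk_mul_inv_of_comm]
  cases y with
  | r k => exact ⟨(i : ZMod (p * q)) ^ (toAdd w).val, k, by ext <;> simp; ring⟩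
  | sr k => exact ⟨-(i : ZMod (p * q)) ^ (toAdd w).val, -k, by ext <;> simp; ring⟩

theorem normal_of_conj_mk_r_mem {S : Subgroup (Gpq h)} (hS : ∀ x ∈ S, ∃ l, x.left = r l)
    (hconj : ∀ l z u k, (⟨r l, z⟩ : Gpq h) ∈ S →
      (⟨r (u * l + (1 - (i : ZMod (p * q)) ^ (toAdd z).val) * k), z⟩ : Gpq h) ∈ S) :
    S.Normal := by
  refine ⟨fun x hx g => ?_⟩
  obtain ⟨l, hl⟩ := hS x hx
  obtain ⟨xl, z⟩ := x
  obtain rfl : xl = r l := hl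
  obtain ⟨u, k, hconj'⟩ := exists_conj_mk_r g l z
  exact hconj' ▸ hconj l z u k hx

theorem ne_bot_of_mk_r_mem {S : Subgroup (Gpq h)} {l : ZMod (p * q)} (hl : l ≠ 0)
    (hS : (⟨r l, 1⟩ : Gpq h) ∈ S) : S ≠ ⊥ := by
  rintro rfl
  exact hl (by simpa [SemidirectProduct.ext_iff, ← r_zero] using hS)

theorem ne_top_of_bG_not_mem {S : Subgroup (Gpq h)} (hS : bG h ∉ S) : S ≠ ⊤ :=
  fun hS' => hS (hS' ▸ Subgroup.mem_top _)

variable (h)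

theorem normal_NSub : (NSub h).Normal :=
  normal_of_conj_mk_r_mem (fun _ hx => hx) (fun _ _ _ _ _ => ⟨_, rfl⟩)

theorem normal_NpqOneSub : (NpqOneSub h).Normal :=
  normal_of_conj_mk_r_mem (fun _ hx => hx.2) (fun _ _ _ _ hx => ⟨hx.1, _, rfl⟩)

theorem normal_NpSub : (NpSub h).Normal := by
  refine normal_of_conj_mk_r_mem (fun _ hx => ⟨_, hx.2.choose_spec⟩) ?_
  rintro _ z u k ⟨rfl, s, hs⟩
  obtain rfl := r.inj hs
  refine ⟨rfl, u * s, congrArg r ?_⟩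
  simp only [toAdd_one, ZMod.val_zero, pow_zero, sub_self]
  ring

theorem normal_NqSub : (NqSub h).Normal := by
  refine normal_of_conj_mk_r_mem (fun _ hx => ⟨_, hx.2.choose_spec⟩) ?_
  rintro _ z u k ⟨rfl, s, hs⟩
  obtain rfl := r.inj hs
  refine ⟨rfl, u * s, congrArg r ?_⟩
  simp only [toAdd_one, ZMod.val_zero, pow_zero, sub_self]
  ring

theorem normal_NpqTwoSub : (NpqTwoSub h).Normal := by
  have := h.neZero
  refine normal_of_conj_mk_r_mem (fun _ hx => ⟨_, hx.choose_spec⟩) ?_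
  rintro _ z u k ⟨s, hs⟩
  obtain rfl := r.inj hs
  obtain ⟨t, ht⟩ := (ZMod.cast_eq_zero_iff_exists_eq_mul (dvd_mul_left q p) _).mp
    (h.castHom_one_sub_pow (toAdd z).val)
  refine ⟨u * s + t * k, congrArg r ?_⟩
  rw [ht]
  ring

theorem normal_N2pqSub : (N2pqSub h).Normal :=
  MonoidHom.normal_ker _

variable {h}

theorem normal_ne_bot_ne_top_of_mem {S : Subgroup (Gpq h)}
    (hS : S ∈ ({NpSub h, NqSub h, NpqOneSub h, NpqTwoSub h, N2pqSub h, NSub h} :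
      Set (Subgroup (Gpq h)))) :
    S.Normal ∧ S ≠ ⊥ ∧ S ≠ ⊤ := by
  have hq := h.natCast_q_ne_zero
  simp only [Set.mem_insert_iff, Set.mem_singleton_iff] at hS
  rcases hS with rfl | rfl | rfl | rfl | rfl | rfl
  · exact ⟨normal_NpSub h, ne_bot_of_mk_r_mem hq ⟨rfl, 1, by simp⟩,
      ne_top_of_bG_not_mem (by simp [bG, NpSub])⟩
  · exact ⟨normal_NqSub h, ne_bot_of_mk_r_mem h.natCast_p_ne_zero ⟨rfl, 1, by simp⟩,
      ne_top_of_bG_not_mem (by simp [bG, NqSub])⟩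
  · exact ⟨normal_NpqOneSub h, ne_bot_of_mk_r_mem hq ⟨rfl, _, rfl⟩,
      ne_top_of_bG_not_mem (by simp [bG, NpqOneSub])⟩
  · exact ⟨normal_NpqTwoSub h, ne_bot_of_mk_r_mem hq ⟨1, by simp⟩,
      ne_top_of_bG_not_mem (by simp [bG, NpqTwoSub])⟩
  · have : Fact (1 < q) := ⟨h.hq.one_lt⟩
    refine ⟨normal_N2pqSub h, ne_bot_of_mk_r_mem hq rfl, fun hS => ?_⟩
    have hc : cG h ∈ N2pqSub h := hS ▸ Subgroup.mem_top _
    simp [cG, N2pqSub] at hc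
  · exact ⟨normal_NSub h, ne_bot_of_mk_r_mem hq ⟨_, rfl⟩,
      ne_top_of_bG_not_mem (by simp [bG, NSub])⟩

end SixSubgroups

section Isomorphisms

variable (h : Hyp p q i)

theorem nonempty_NpSub_mulEquiv : Nonempty (NpSub h ≃* Multiplicative (ZMod p)) := by
  have := h.neZero
  refine MonoidHom.nonempty_mulEquiv_of_range_eq
    (f := (inl.comp (rHom (p * q))).comp (ZMod.crtInl h.coprime_p_q).toMultiplicative)
    (inl_injective.comp ((rHom_injective _).comp (ZMod.crtInl_injective _))) ?_
  ext ⟨x, z⟩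
  cases x <;> simp [MonoidHom.mem_range, NpSub, SemidirectProduct.ext_iff,
    ZMod.exists_crtInl_eq_iff, ZMod.cast_eq_zero_iff_exists_eq_mul, and_comm,
    @eq_comm (Multiplicative (ZMod q)) 1]

theorem nonempty_NqSub_mulEquiv : Nonempty (NqSub h ≃* Multiplicative (ZMod q)) := by
  have := h.neZero
  refine MonoidHom.nonempty_mulEquiv_of_range_eq
    (f := (inl.comp (rHom (p * q))).comp (ZMod.crtInr h.coprime_p_q).toMultiplicative)
    (inl_injective.comp ((rHom_injective _).comp (ZMod.crtInr_injective _))) ?_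
  ext ⟨x, z⟩
  cases x <;> simp [MonoidHom.mem_range, NqSub, SemidirectProduct.ext_iff,
    ZMod.exists_crtInr_eq_iff, ZMod.cast_eq_zero_iff_exists_eq_mul, and_comm,
    @eq_comm (Multiplicative (ZMod q)) 1]

theorem nonempty_NpqOneSub_mulEquiv :
    Nonempty (NpqOneSub h ≃* Multiplicative (ZMod (p * q))) := by
  refine MonoidHom.nonempty_mulEquiv_of_range_eq (f := inl.comp (rHom (p * q)))
    (inl_injective.comp (rHom_injective _)) ?_
  ext ⟨x, z⟩
  cases x <;> simp [MonoidHom.mem_range, NpqOneSub, SemidirectProduct.ext_iff, and_comm,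
    @eq_comm (Multiplicative (ZMod q)) 1]

theorem nonempty_NpqTwoSub_mulEquiv : Nonempty (NpqTwoSub h ≃* Fpq h) := by
  have := h.neZero
  let ι : Multiplicative (ZMod p) →* DihedralGroup (p * q) :=
    (rHom (p * q)).comp (ZMod.crtInl h.coprime_p_q).toMultiplicative
  have hι : Function.Injective ι := (rHom_injective _).comp (ZMod.crtInl_injective _)
  have hφ : ∀ z, ι.comp (h.phiF z).toMonoidHom =
      (h.phiG (MonoidHom.id _ z)).toMonoidHom.comp ι := by
    intro z
    ext x
    simp [ι, h.phiF_apply, h.crtInl_pow_mul]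
  refine MonoidHom.nonempty_mulEquiv_of_range_eq (f := map ι (MonoidHom.id _) hφ)
    (fun a b hab => have hab' := SemidirectProduct.ext_iff.mp hab
      SemidirectProduct.ext (hι hab'.1) hab'.2) ?_
  ext ⟨x, z⟩
  cases x <;> simp [MonoidHom.mem_range, exists_iff, NpqTwoSub, SemidirectProduct.ext_iff, ι,
    ZMod.exists_crtInl_eq_iff, ZMod.cast_eq_zero_iff_exists_eq_mul]

theorem nonempty_N2pqSub_mulEquiv : Nonempty (N2pqSub h ≃* DihedralGroup (p * q)) :=
  MonoidHom.nonempty_mulEquiv_of_range_eq inl_injective range_inl_eq_ker_rightHom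

end Isomorphisms

end Mizerka

open Mizerka in
/-- The nontrivial proper normal subgroups of `G_{p,q}` are exactly
`N_p, N_q, N¹_{pq}, N²_{pq}, N_{2pq}, N_{pq²}`, and moreover `N_p ≅ C_p`, `N_q ≅ C_q`,
`N¹_{pq} ≅ C_{pq}`, `N²_{pq} ≅ F_{p,q}`, `N_{2pq} ≅ D_{2pq}`. -/
theorem statement_13 {p q i : ℕ} (h : Hyp p q i) :
    (∀ N : Subgroup (Gpq h), (N.Normal ∧ N ≠ ⊥ ∧ N ≠ ⊤) ↔
      N ∈ ({NpSub h, NqSub h, NpqOneSub h, NpqTwoSub h, N2pqSub h, NSub h} :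
        Set (Subgroup (Gpq h)))) ∧
    Nonempty (↥(NpSub h) ≃* Multiplicative (ZMod p)) ∧
    Nonempty (↥(NqSub h) ≃* Multiplicative (ZMod q)) ∧
    Nonempty (↥(NpqOneSub h) ≃* Multiplicative (ZMod (p * q))) ∧
    Nonempty (↥(NpqTwoSub h) ≃* Fpq h) ∧
    Nonempty (↥(N2pqSub h) ≃* DihedralGroup (p * q)) := by
  refine ⟨fun N => ⟨fun ⟨hN, hbot, htop⟩ => ?_, normal_ne_bot_ne_top_of_mem⟩,
    nonempty_NpSub_mulEquiv h, nonempty_NqSub_mulEquiv h, nonempty_NpqOneSub_mulEquiv h,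
    nonempty_NpqTwoSub_mulEquiv h, nonempty_N2pqSub_mulEquiv h⟩
  rcases eq_bot_or_eq_top_or_mem_of_normal hN with rfl | rfl | hmem
  exacts [absurd rfl hbot, absurd rfl htop, hmem]
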